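/- Let $q, t$ be nonzero complex numbers with $t \ne 1$, and let $x_1,\dots,x_n, y_1,\dots,y_m, w$ be complex numbers such that the $x_i$ are pairwise distinct, the $y_j$ are pairwise distinct, $x_i \ne y_j$ for all $i,j$, and $1 - t^{-1} x_i w \ne 0$, $1 - t^{-1} y_j w \ne 0$ for all $i, j$. Then $\prod_{i=1}^n \frac{1 - x_i w}{1 - t^{-1} x_i w} \prod_{j=1}^m \frac{1 - t^{-1} q y_j w}{1 - t^{-1} y_j w} - 1 = t^n q^m - 1 + (1-t)\sum_{i=1}^n \frac{A_i}{1 - t^{-1} x_i w} + (1-q)\sum_{j=1}^m \frac{B_j}{1 - t^{-1} y_j w}$, where $A_i = \prod_{k \ne i} \frac{x_i - t x_k}{x_i - x_k} \prod_{j=1}^m \frac{x_i - q y_j}{x_i - y_j}$ and $B_j = \prod_{i=1}^n \frac{y_j - t x_i}{y_j - x_i} \prod_{l \ne j} \frac{y_j - q y_l}{y_j - y_l}$. -/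

import Mathlib

/-! Put `u = t⁻¹ w` and treat the `x i` and `y j` alike as nodes `z k` with weights `p k`
(`t` on the `x`'s, `q` on the `y`'s). The identity is then the partial-fraction expansion of
`∏ k, (1 - p k u z k) / (1 - u z k)`, which tends to `∏ k, p k` as `u → ∞` and has simple poles at
`u = (z k)⁻¹`. It is proved by induction on the nodes: multiplying the expansion by one more
factor splits every product of two simple poles into partial fractions, and the residue
collected at the new pole `(z a)⁻¹` is the old expansion evaluated at `u = (z a)⁻¹`. -/

open Finset

section PartialFractions

variable {K ι : Type*} [Field K]

theorem div_one_sub_eq_add_div (p v : K) (hv : 1 - v ≠ 0) :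
    (1 - p * v) / (1 - v) = p + (1 - p) / (1 - v) := by
  field_simp
  ring

theorem div_one_sub_div_one_sub (p u a b : K) (hab : a ≠ b) (ha : 1 - u * a ≠ 0)
    (hb : 1 - u * b ≠ 0) :
    (1 - p * (u * a)) / (1 - u * a) / (1 - u * b) =
      (b - p * a) / (b - a) / (1 - u * b) + (1 - p) * a / (a - b) / (1 - u * a) := by
  have hab' : a - b ≠ 0 := sub_ne_zero.mpr hab
  have hba : b - a ≠ 0 := sub_ne_zero.mpr hab.symm
  field_simp
  ring

theorem one_sub_inv_mul (c a : K) (hc : c ≠ 0) : 1 - c⁻¹ * a = (c - a) / c := by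
  field_simp

theorem div_one_sub_inv_mul (p c a : K) (hc : c ≠ 0) :
    (1 - p * (c⁻¹ * a)) / (1 - c⁻¹ * a) = (c - p * a) / (c - a) := by
  rw [mul_left_comm, one_sub_inv_mul _ _ hc, one_sub_inv_mul _ _ hc, div_div_div_cancel_right₀ hc]

variable [DecidableEq ι] (p z : ι → K)

/-- `A i` and `B j` of the statement, up to the factors `1 - t` and `1 - q`. -/
def residueCoeff (s : Finset ι) (k : ι) : K :=
  ∏ l ∈ s.erase k, (z k - p l * z l) / (z k - z l)

theorem prod_residue_eq (s : Finset ι) (c : K) (hc : ∀ k ∈ s, c ≠ z k)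
    (hs : ∀ u : K, (∀ k ∈ s, 1 - u * z k ≠ 0) →
      ∏ k ∈ s, (1 - p k * (u * z k)) / (1 - u * z k) =
        ∏ k ∈ s, p k + ∑ k ∈ s, (1 - p k) * residueCoeff p z s k / (1 - u * z k)) :
    ∏ l ∈ s, (c - p l * z l) / (c - z l) =
      ∏ k ∈ s, p k + ∑ k ∈ s, (1 - p k) * residueCoeff p z s k * c / (c - z k) := by
  rcases eq_or_ne c 0 with rfl | hc0
  · simp only [zero_sub, mul_zero, zero_div, sum_const_zero, add_zero]
    refine prod_congr rfl fun k hk => ?_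
    rw [neg_div_neg_eq, mul_div_cancel_right₀ _ (hc k hk).symm]
  · have hden : ∀ k ∈ s, 1 - c⁻¹ * z k ≠ 0 := fun k hk => by
      rw [one_sub_inv_mul _ _ hc0]
      exact div_ne_zero (sub_ne_zero.mpr (hc k hk)) hc0
    calc ∏ l ∈ s, (c - p l * z l) / (c - z l)
        = ∏ k ∈ s, (1 - p k * (c⁻¹ * z k)) / (1 - c⁻¹ * z k) :=
          prod_congr rfl fun k _ => (div_one_sub_inv_mul _ _ _ hc0).symm
      _ = _ := hs c⁻¹ hden
      _ = _ := by
          congr 1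
          refine sum_congr rfl fun k _ => ?_
          rw [one_sub_inv_mul _ _ hc0, div_div_eq_mul_div]

theorem residueCoeff_insert_self {a : ι} {s : Finset ι} (ha : a ∉ s) :
    residueCoeff p z (insert a s) a = ∏ l ∈ s, (z a - p l * z l) / (z a - z l) := by
  rw [residueCoeff, erase_insert ha]

theorem residueCoeff_insert_of_mem {a k : ι} {s : Finset ι} (ha : a ∉ s) (hk : k ∈ s) :
    residueCoeff p z (insert a s) k =
      (z k - p a * z a) / (z k - z a) * residueCoeff p z s k := by
  rw [residueCoeff, erase_insert_of_ne (ne_of_mem_of_not_mem hk ha).symm,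
    prod_insert fun h => ha (mem_of_mem_erase h), residueCoeff]

theorem prod_div_one_sub_eq (s : Finset ι) (hz : Set.InjOn z s) (u : K)
    (hu : ∀ k ∈ s, 1 - u * z k ≠ 0) :
    ∏ k ∈ s, (1 - p k * (u * z k)) / (1 - u * z k) =
      ∏ k ∈ s, p k + ∑ k ∈ s, (1 - p k) * residueCoeff p z s k / (1 - u * z k) := by
  induction s using Finset.induction_on generalizing u with
  | empty => simp
  | insert a s ha ih =>
    have hzs : Set.InjOn z s := hz.mono (subset_insert a s)
    have hza : ∀ k ∈ s, z a ≠ z k := fun k hk h =>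
      ha (hz (mem_insert_self a s) (mem_insert_of_mem hk) h ▸ hk)
    have hua : 1 - u * z a ≠ 0 := hu a (mem_insert_self a s)
    have hus : ∀ k ∈ s, 1 - u * z k ≠ 0 := fun k hk => hu k (mem_insert_of_mem hk)
    have hcross : ∀ k ∈ s, (1 - p a * (u * z a)) / (1 - u * z a) *
        ((1 - p k) * residueCoeff p z s k / (1 - u * z k)) =
          (1 - p k) * residueCoeff p z (insert a s) k / (1 - u * z k) +
            (1 - p a) * ((1 - p k) * residueCoeff p z s k * z a / (z a - z k)) / (1 - u * z a) :=
        fun k hk => by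
      rw [residueCoeff_insert_of_mem p z ha hk]
      linear_combination ((1 - p k) * residueCoeff p z s k) *
        div_one_sub_div_one_sub (p a) u (z a) (z k) (hza k hk) hua (hus k hk)
    rw [prod_insert ha, ih hzs u hus, prod_insert ha, sum_insert ha,
      residueCoeff_insert_self p z ha, prod_residue_eq p z s (z a) hza (ih hzs), mul_add, mul_sum,
      sum_congr rfl hcross, sum_add_distrib, div_one_sub_eq_add_div _ _ hua, ← sum_div, ← mul_sum]
    ring

end PartialFractions

theorem Finset.prod_univ_erase_inl {α β M : Type*} [CommMonoid M] [Fintype α] [Fintype β]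
    [DecidableEq α] [DecidableEq β] (f : α ⊕ β → M) (a : α) :
    ∏ l ∈ univ.erase (Sum.inl a), f l = (∏ k ∈ univ.erase a, f (.inl k)) * ∏ j, f (.inr j) := by
  rw [prod_sum_eq_prod_toLeft_mul_prod_toRight]
  congr 2 <;> ext <;> simp

theorem Finset.prod_univ_erase_inr {α β M : Type*} [CommMonoid M] [Fintype α] [Fintype β]
    [DecidableEq α] [DecidableEq β] (f : α ⊕ β → M) (b : β) :
    ∏ l ∈ univ.erase (Sum.inr b), f l = (∏ k, f (.inl k)) * ∏ j ∈ univ.erase b, f (.inr j) := by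
  rw [prod_sum_eq_prod_toLeft_mul_prod_toRight]
  congr 2 <;> ext <;> simp

theorem stmt7_general (q t : ℂ) (ht0 : t ≠ 0)
    (n m : ℕ) (x : Fin n → ℂ) (y : Fin m → ℂ) (w : ℂ)
    (hx : Function.Injective x) (hy : Function.Injective y)
    (hxy : ∀ i j, x i ≠ y j)
    (hwx : ∀ i, 1 - t⁻¹ * x i * w ≠ 0) (hwy : ∀ j, 1 - t⁻¹ * y j * w ≠ 0) :
    (∏ i, (1 - x i * w) / (1 - t⁻¹ * x i * w)) *
      (∏ j, (1 - t⁻¹ * q * y j * w) / (1 - t⁻¹ * y j * w)) - 1 =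
    t ^ n * q ^ m - 1 +
      (1 - t) * ∑ i,
        ((∏ k ∈ Finset.univ.erase i, (x i - t * x k) / (x i - x k)) *
          ∏ j, (x i - q * y j) / (x i - y j)) / (1 - t⁻¹ * x i * w) +
      (1 - q) * ∑ j,
        ((∏ i, (y j - t * x i) / (y j - x i)) *
          ∏ l ∈ Finset.univ.erase j, (y j - q * y l) / (y j - y l)) /
            (1 - t⁻¹ * y j * w) := by
  have hden : ∀ c : ℂ, t⁻¹ * w * c = t⁻¹ * c * w := fun c => by ring
  have hnum_x : ∀ c : ℂ, t * (t⁻¹ * c * w) = c * w := fun c => by field_simp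
  have hnum_y : ∀ c : ℂ, q * (t⁻¹ * c * w) = t⁻¹ * q * c * w := fun c => by ring
  have key := prod_div_one_sub_eq (Sum.elim (fun _ => t) fun _ => q) (Sum.elim x y) univ
    (hx.sumElim hy hxy).injOn (t⁻¹ * w) (by rintro (i | j) - <;> simp [hden, hwx, hwy])
  simp only [Fintype.prod_sum_type, Fintype.sum_sum_type, residueCoeff, prod_univ_erase_inl,
    prod_univ_erase_inr, Sum.elim_inl, Sum.elim_inr, hden, hnum_x, hnum_y, prod_const, card_univ,
    Fintype.card_fin] at key
  rw [key, mul_sum, mul_sum]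
  simp only [mul_div_assoc]
  ring

theorem stmt7 (q t : ℂ) (hq : q ≠ 0) (ht0 : t ≠ 0) (ht1 : t ≠ 1)
    (n m : ℕ) (x : Fin n → ℂ) (y : Fin m → ℂ) (w : ℂ)
    (hx : Function.Injective x) (hy : Function.Injective y)
    (hxy : ∀ i j, x i ≠ y j)
    (hwx : ∀ i, 1 - t⁻¹ * x i * w ≠ 0) (hwy : ∀ j, 1 - t⁻¹ * y j * w ≠ 0) :
    (∏ i, (1 - x i * w) / (1 - t⁻¹ * x i * w)) *
      (∏ j, (1 - t⁻¹ * q * y j * w) / (1 - t⁻¹ * y j * w)) - 1 =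
    t ^ n * q ^ m - 1 +
      (1 - t) * ∑ i,
        ((∏ k ∈ Finset.univ.erase i, (x i - t * x k) / (x i - x k)) *
          ∏ j, (x i - q * y j) / (x i - y j)) / (1 - t⁻¹ * x i * w) +
      (1 - q) * ∑ j,
        ((∏ i, (y j - t * x i) / (y j - x i)) *
          ∏ l ∈ Finset.univ.erase j, (y j - q * y l) / (y j - y l)) /
            (1 - t⁻¹ * y j * w) :=
  stmt7_general q t ht0 n m x y w hx hy hxy hwx hwy
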